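/- arXiv:1510.07128 — 2 statements merged into one kernel-verified Lean document; each statement's English description precedes it below -/
import Mathlib

section
/- Laufer's algorithm terminates and computes Z_min: let Γ be a connected negative definite plumbing tree. Define a sequence l_0 = Σ_v E_v, and inductively, if there exists a vertex v with (l_i, E_v) > 0, set l_{i+1} = l_i + E_v for some such v; otherwise stop. Then this process stops after finitely many steps, and the final cycle l_t satisfies (l_t, E_v) ≤ 0 for all v and equals Z_min (independently of the choices made). -/
open Matrix BigOperators

/-- Intersection matrix of a graph with adjacency relation `A` and integer decorations `e`. -/
def imatZ {V : Type} [Fintype V] [DecidableEq V] (A : V → V → Prop) [DecidableRel A]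
    (e : V → ℤ) : Matrix V V ℤ :=
  fun v w => if v = w then e v else if A v w then 1 else 0

/-- Negative definiteness of an integer matrix (as a quadratic form over ℚ). -/
def NegDefZ {V : Type} [Fintype V] (M : Matrix V V ℤ) : Prop :=
  ∀ x : V → ℚ, x ≠ 0 → ∑ v, ∑ w, x v * (M v w : ℚ) * x w < 0

/-- The pairing `(Z, E_v)` of a cycle `Z` with the base element `E_v`. -/
def pairZ {V : Type} [Fintype V] (M : Matrix V V ℤ) (Z : V → ℤ) (v : V) : ℤ :=
  ∑ w, M v w * Z w

/-- `Z` is Artin's minimal (fundamental) cycle: effective, nonzero, `(Z,E_v) ≤ 0` for all `v`,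
and componentwise minimal among all such cycles. -/
def IsZmin {V : Type} [Fintype V] (M : Matrix V V ℤ) (Z : V → ℤ) : Prop :=
  (∀ v, 0 ≤ Z v) ∧ Z ≠ 0 ∧ (∀ v, pairZ M Z v ≤ 0) ∧
    ∀ Z' : V → ℤ, ((∀ v, 0 ≤ Z' v) ∧ Z' ≠ 0 ∧ (∀ v, pairZ M Z' v ≤ 0)) → ∀ v, Z v ≤ Z' v

/-- `K` is the canonical cycle: `(K + E_v, E_v) + 2 = 0` for all `v`. -/
def IsCanonical {V : Type} [Fintype V] (M : Matrix V V ℤ) (K : V → ℚ) : Prop :=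
  ∀ v, (∑ w, (M v w : ℚ) * K w) = -2 - (M v v : ℚ)

/-- The Riemann--Roch expression `χ(l) = -(K + l, l)/2`. -/
def chi {V : Type} [Fintype V] (M : Matrix V V ℤ) (K : V → ℚ) (l : V → ℚ) : ℚ :=
  -(∑ v, ∑ w, (K v + l v) * (M v w : ℚ) * l w) / 2

/-- Artin's rationality criterion: `χ(Z_min) ≥ 1`. -/
def IsRationalGraph {V : Type} [Fintype V] (M : Matrix V V ℤ) : Prop :=
  ∀ (Z : V → ℤ) (K : V → ℚ), IsZmin M Z → IsCanonical M K →
    1 ≤ chi M K (fun v => (Z v : ℚ))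

/-!
Every step of the algorithm keeps `l_i` below every effective nonzero cycle `Z` with
`(Z, E_v) ≤ 0` for all `v`: off-diagonal entries of the intersection matrix are nonnegative,
so if `l_i ≤ Z` agreed with `Z` at `v` we would get `(l_i, E_v) ≤ (Z, E_v) ≤ 0`. On a connected
graph such cycles are `≥ Σ_v E_v = l_0`, and one of them exists by negative definiteness:
a negative definite matrix with nonnegative off-diagonal entries sends no vector with a negative
entry to a nonpositive one, and Cramer's rule solves `M z = -(det M)² · 1` over `ℤ`. Since `Σ_v l_i(v)`
grows by one per step, the algorithm stops, and its output lies below all such cycles.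
-/

def Matrix.IsMetzler {n R : Type*} [Zero R] [LE R] (M : Matrix n n R) : Prop :=
  Pairwise fun i j => 0 ≤ M i j

namespace Matrix

variable {n R : Type*} [Fintype n] [CommRing R] [LinearOrder R] [IsStrictOrderedRing R]
  {M : Matrix n n R}

lemma IsMetzler.dotProduct_mulVec_nonneg (hM : M.IsMetzler) {x y : n → R} (hx : 0 ≤ x)
    (hy : 0 ≤ y) (hxy : ∀ i, x i * y i = 0) : 0 ≤ x ⬝ᵥ (M *ᵥ y) := by
  simp only [dotProduct, mulVec, Finset.mul_sum]
  refine Finset.sum_nonneg fun i _ => Finset.sum_nonneg fun j _ => ?_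
  rcases eq_or_ne i j with rfl | hij
  · rw [mul_left_comm, hxy, mul_zero]
  · exact mul_nonneg (hx i) (mul_nonneg (hM hij) (hy j))

lemma IsMetzler.nonneg_of_mulVec_nonpos (hM : M.IsMetzler)
    (hneg : ∀ x ≠ 0, x ⬝ᵥ (M *ᵥ x) < 0) {y : n → R} (hy : M *ᵥ y ≤ 0) : 0 ≤ y := by
  have hcross : 0 ≤ y⁻ ⬝ᵥ (M *ᵥ y⁺) :=
    hM.dotProduct_mulVec_nonneg (negPart_nonneg y) (posPart_nonneg y) fun i => by
      rcases le_total (y i) 0 with h | h <;> simp [h]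
  have hdirect : y⁻ ⬝ᵥ (M *ᵥ y) ≤ 0 :=
    Finset.sum_nonpos fun i _ => mul_nonpos_of_nonneg_of_nonpos (negPart_nonneg y i) (hy i)
  have hsplit : y⁻ ⬝ᵥ (M *ᵥ y) = y⁻ ⬝ᵥ (M *ᵥ y⁺) - y⁻ ⬝ᵥ (M *ᵥ y⁻) := by
    rw [← dotProduct_sub, ← mulVec_sub, posPart_sub_negPart]
  have hnegPart : y⁻ = 0 := by
    by_contra h
    linarith [hneg _ h]
  intro i
  simpa using congrFun hnegPart i

lemma det_ne_zero_of_dotProduct_mulVec_neg [DecidableEq n]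
    (hneg : ∀ x ≠ 0, x ⬝ᵥ (M *ᵥ x) < 0) : M.det ≠ 0 := by
  intro h
  obtain ⟨x, hx, hMx⟩ := exists_mulVec_eq_zero_iff.mpr h
  simpa [hMx] using hneg x hx

lemma IsMetzler.exists_nonneg_ne_zero_mulVec_nonpos [DecidableEq n] [Nonempty n]
    (hM : M.IsMetzler) (hneg : ∀ x ≠ 0, x ⬝ᵥ (M *ᵥ x) < 0) :
    ∃ z, 0 ≤ z ∧ z ≠ 0 ∧ M *ᵥ z ≤ 0 := by
  have hMz : M *ᵥ cramer M (fun _ => -M.det) = fun _ => -M.det ^ 2 := by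
    rw [mulVec_cramer]
    ext
    simp [sq]
  have hnonpos : M *ᵥ cramer M (fun _ => -M.det) ≤ 0 := fun i => by simp [hMz, sq_nonneg]
  refine ⟨_, hM.nonneg_of_mulVec_nonpos hneg hnonpos, fun h => ?_, hnonpos⟩
  have := congrFun hMz (Classical.arbitrary n)
  simp [h, det_ne_zero_of_dotProduct_mulVec_neg hneg, eq_comm (a := (0 : R))] at this

end Matrix

lemma isMetzler_imatZ {V : Type} [Fintype V] [DecidableEq V] (A : V → V → Prop)
    [DecidableRel A] (e : V → ℤ) : (imatZ A e).IsMetzler := fun v w hvw => by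
  simp only [imatZ, if_neg hvw]
  split <;> norm_num

lemma imatZ_pos_of_adj {V : Type} [Fintype V] [DecidableEq V] (G : SimpleGraph V)
    [DecidableRel G.Adj] (e : V → ℤ) {v w : V} (h : G.Adj v w) : 0 < imatZ G.Adj e v w := by
  simp [imatZ, G.ne_of_adj h, h]

section Cycles

variable {V : Type} [Fintype V] {M : Matrix V V ℤ}

lemma NegDefZ.dotProduct_mulVec_neg (hM : NegDefZ M) : ∀ x ≠ 0, x ⬝ᵥ (M *ᵥ x) < 0 := by
  intro x hx
  have hxq : (fun v => (x v : ℚ)) ≠ 0 := fun h => hx (funext fun v => by simpa using congrFun h v)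
  have hq : ((x ⬝ᵥ (M *ᵥ x) : ℤ) : ℚ) < 0 := by
    simpa [dotProduct, mulVec, Finset.mul_sum, mul_assoc] using hM _ hxq
  exact_mod_cast hq

lemma pairZ_le_of_le_of_eq (hM : M.IsMetzler) {c Z : V → ℤ} (hle : c ≤ Z) {v : V}
    (hv : c v = Z v) : pairZ M c v ≤ pairZ M Z v := by
  refine Finset.sum_le_sum fun w _ => ?_
  rcases eq_or_ne v w with rfl | hvw
  · rw [hv]
  · exact mul_le_mul_of_nonneg_left (hle w) (hM hvw)

lemma lt_of_le_of_pairZ_pos (hM : M.IsMetzler) {c Z : V → ℤ} (hle : c ≤ Z) {v : V}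
    (hZ : pairZ M Z v ≤ 0) (hc : 0 < pairZ M c v) : c v < Z v :=
  (hle v).lt_of_ne fun hv => by linarith [pairZ_le_of_le_of_eq hM hle hv]

-- At a vertex `w` with `Z w = 0` next to a vertex `u` with `Z u > 0`, `(Z, E_w) > 0`.
lemma pos_of_pairZ_nonpos (G : SimpleGraph V) (hconn : G.Connected) (hM : M.IsMetzler)
    (hadj : ∀ v w, G.Adj v w → 0 < M v w) {Z : V → ℤ} (hZ : 0 ≤ Z) (hZ0 : Z ≠ 0)
    (hpair : ∀ v, pairZ M Z v ≤ 0) (v : V) : 0 < Z v := by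
  have hstep : ∀ u w, G.Adj u w → 0 < Z u → 0 < Z w := by
    intro u w huw hu
    by_contra hw
    have hw0 : Z w = 0 := le_antisymm (not_lt.mp hw) (hZ w)
    have hterm : ∀ x ∈ Finset.univ, 0 ≤ M w x * Z x := fun x _ => by
      rcases eq_or_ne w x with rfl | hwx
      · simp [hw0]
      · exact mul_nonneg (hM hwx) (hZ x)
    have : M w u * Z u ≤ pairZ M Z w := Finset.single_le_sum hterm (Finset.mem_univ u)
    linarith [hpair w, mul_pos (hadj w u huw.symm) hu]
  obtain ⟨u, hu⟩ : ∃ u, 0 < Z u :=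
    (Function.ne_iff.mp hZ0).imp fun u hu => (hZ u).lt_of_ne' hu
  obtain ⟨p⟩ := hconn u v
  induction p with
  | nil => exact hu
  | cons h _ ih => exact ih (hstep _ _ h hu)

end Cycles

section Laufer

variable {V : Type} [Fintype V] [DecidableEq V]

def IsLauferSeq (M : Matrix V V ℤ) (l : ℕ → V → ℤ) : Prop :=
  ∀ i, (∃ v, 0 < pairZ M (l i) v) →
    ∃ v, 0 < pairZ M (l i) v ∧ l (i + 1) = fun w => l i w + if w = v then 1 else 0

variable {M : Matrix V V ℤ} {l : ℕ → V → ℤ}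

lemma IsLauferSeq.ge_init_and_sum (hl : IsLauferSeq M l) {i : ℕ}
    (hrun : ∀ j < i, ∃ v, 0 < pairZ M (l j) v) :
    l 0 ≤ l i ∧ ∑ v, l i v = ∑ v, l 0 v + i := by
  induction i with
  | zero => simp
  | succ i ih =>
    obtain ⟨hge, hsum⟩ := ih fun j hj => hrun j (by omega)
    obtain ⟨v, -, hsucc⟩ := hl i (hrun i (by omega))
    refine ⟨fun w => ?_, ?_⟩
    · have : l 0 w ≤ l i w := hge w
      simp only [hsucc]
      split <;> omega
    · simp [hsucc, Finset.sum_add_distrib, hsum]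
      ring

lemma IsLauferSeq.le_of_pairZ_nonpos (hl : IsLauferSeq M l) (hM : M.IsMetzler) {Z : V → ℤ}
    (hZ : ∀ v, pairZ M Z v ≤ 0) (h0 : l 0 ≤ Z) {i : ℕ}
    (hrun : ∀ j < i, ∃ v, 0 < pairZ M (l j) v) : l i ≤ Z := by
  induction i with
  | zero => exact h0
  | succ i ih =>
    have hle := ih fun j hj => hrun j (by omega)
    obtain ⟨v, hv, hsucc⟩ := hl i (hrun i (by omega))
    have := lt_of_le_of_pairZ_pos hM hle (hZ v) hv
    intro w
    simp only [hsucc]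
    split
    · subst w; omega
    · simpa using hle w

lemma IsLauferSeq.exists_pairZ_nonpos (hl : IsLauferSeq M l) (hM : M.IsMetzler) {Z : V → ℤ}
    (hZ : ∀ v, pairZ M Z v ≤ 0) (h0 : l 0 ≤ Z) : ∃ t, ∀ v, pairZ M (l t) v ≤ 0 := by
  by_contra! hrun
  set i := (∑ v, Z v - ∑ v, l 0 v).toNat + 1
  have hsum := (hl.ge_init_and_sum (i := i) fun j _ => hrun j).2
  have hle : ∑ v, l i v ≤ ∑ v, Z v := Finset.sum_le_sum fun v _ =>
    hl.le_of_pairZ_nonpos hM hZ h0 (fun j _ => hrun j) v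
  have := Int.self_le_toNat (∑ v, Z v - ∑ v, l 0 v)
  omega

end Laufer

/-- Laufer's algorithm terminates and computes `Z_min`:
any sequence starting from `l_0 = Σ_v E_v`, which at each step adds `E_v`
for some `v` with `(l_i, E_v) > 0` as long as such a vertex exists,
reaches after finitely many steps a cycle `l_t` with `(l_t, E_v) ≤ 0` for all `v`,
and this cycle is Artin's minimal cycle `Z_min` (independently of the choices). -/
theorem laufer_algorithm {V : Type} [Fintype V] [DecidableEq V] [Nonempty V]
    (G : SimpleGraph V) [DecidableRel G.Adj] (e : V → ℤ)
    (htree : G.IsTree) (hneg : NegDefZ (imatZ G.Adj e))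
    (l : ℕ → V → ℤ)
    (h0 : l 0 = fun _ => 1)
    (hstep : ∀ i : ℕ, (∃ v, 0 < pairZ (imatZ G.Adj e) (l i) v) →
      ∃ v, 0 < pairZ (imatZ G.Adj e) (l i) v ∧
        l (i + 1) = fun w => l i w + (if w = v then 1 else 0)) :
    ∃ t : ℕ, (∀ v, pairZ (imatZ G.Adj e) (l t) v ≤ 0) ∧ IsZmin (imatZ G.Adj e) (l t) := by
  have hM := isMetzler_imatZ G.Adj e
  have hl : IsLauferSeq (imatZ G.Adj e) l := hstep
  have hinit : ∀ Z, 0 ≤ Z → Z ≠ 0 → (∀ v, pairZ (imatZ G.Adj e) Z v ≤ 0) → l 0 ≤ Z := by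
    intro Z hZ hZ0 hpair v
    have := pos_of_pairZ_nonpos G htree.connected hM (fun _ _ => imatZ_pos_of_adj G e) hZ hZ0
      hpair v
    simp only [h0]
    omega
  obtain ⟨Z, hZ, hZ0, hpair⟩ := hM.exists_nonneg_ne_zero_mulVec_nonpos hneg.dotProduct_mulVec_neg
  have hex := hl.exists_pairZ_nonpos hM hpair (hinit Z hZ hZ0 hpair)
  have hrun : ∀ j < Nat.find hex, ∃ v, 0 < pairZ (imatZ G.Adj e) (l j) v := fun j hj => by
    simpa using Nat.find_min hex hj
  have hge : ∀ v, 1 ≤ l (Nat.find hex) v := fun v => by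
    simpa [h0] using (hl.ge_init_and_sum hrun).1 v
  refine ⟨Nat.find hex, Nat.find_spec hex, fun v => by linarith [hge v], fun h => ?_,
    Nat.find_spec hex, fun Z' ⟨hZ', hZ'0, hpair'⟩ =>
      hl.le_of_pairZ_nonpos hM hpair' (hinit Z' hZ' hZ'0 hpair') hrun⟩
  simpa [h] using hge (Classical.arbitrary V)
end

section
/- With notation as in Lemma 2.5 of the paper: Γ a connected negative definite plumbing tree, e = (v,w) an edge with components Γ_v, Γ_w of Γ∖e, and r := -det(Γ_w∖w)/det(Γ_w). Let Γ_v(1/r) be Γ_v with a new vertex of decoration 1/r attached to v. Then det(Γ_v(1/r)) = det(Γ)/det(Γ_w∖w), and in particular det(Γ_v(1/r)) > 0. -/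
/-!
Both sides reduce, by Schur complements, to `Γ_v` with a shifted decoration at `v`.
Eliminating the block `Γ_w` from `Γ` gives `det Γ = det Γ_w · det Γ_v[c]`, where `Γ_v[c]` adds
`c = ((-I(Γ_w))⁻¹)_ww = det(Γ_w∖w) / det Γ_w = -r` to the decoration of `v`; eliminating the new
vertex of `Γ_v(x)` gives `det Γ_v(x) = -x · det Γ_v[-1/x]`. For `x = 1/r` the two shifts agree,
so `det Γ_v(1/r) = -(1/r) · det Γ / det Γ_w = det Γ / det(Γ_w∖w)`. Positivity holds because
every principal submatrix of the positive definite matrix `-I(Γ)` has positive determinant,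
which follows by induction on the size from the Schur complement of a single vertex.
-/

open Matrix BigOperators

/-- Intersection matrix of a graph with adjacency relation `A` and rational decorations `e`. -/
def imatQ {V : Type} [Fintype V] [DecidableEq V] (A : V → V → Prop) [DecidableRel A]
    (e : V → ℚ) : Matrix V V ℚ :=
  fun v w => if v = w then e v else if A v w then 1 else 0

/-- A matrix is negative definite. -/
def NegDefQ {V : Type} [Fintype V] (M : Matrix V V ℚ) : Prop :=
  ∀ x : V → ℚ, x ≠ 0 → ∑ v, ∑ w, x v * M v w * x w < 0

/-- The intersection matrix of the graph `Γ` obtained by joining two decorated graphs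
(with matrices `I₁`, `I₂`) by a single new edge connecting `v ∈ Γ_v` to `w ∈ Γ_w`. -/
def joinMat {V₁ V₂ : Type} [Fintype V₁] [DecidableEq V₁] [Fintype V₂] [DecidableEq V₂]
    (I₁ : Matrix V₁ V₁ ℚ) (I₂ : Matrix V₂ V₂ ℚ) (v : V₁) (w : V₂) :
    Matrix (V₁ ⊕ V₂) (V₁ ⊕ V₂) ℚ :=
  fun x y =>
    match x, y with
    | Sum.inl a, Sum.inl b => I₁ a b
    | Sum.inr a, Sum.inr b => I₂ a b
    | Sum.inl a, Sum.inr b => if a = v ∧ b = w then 1 else 0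
    | Sum.inr a, Sum.inl b => if a = w ∧ b = v then 1 else 0

/-- The intersection matrix of the graph obtained by attaching one new vertex with
decoration `r` by a single edge to the vertex `w`. -/
def attachMat {V : Type} [Fintype V] [DecidableEq V] (I : Matrix V V ℚ) (w : V) (r : ℚ) :
    Matrix (Option V) (Option V) ℚ :=
  fun x y =>
    match x, y with
    | some a, some b => I a b
    | none, none => r
    | some a, none => if a = w then 1 else 0
    | none, some b => if b = w then 1 else 0

/-- The intersection matrix of the full subgraph obtained by deleting the vertex `w`. -/
def delVertMat {V : Type} [Fintype V] [DecidableEq V] (I : Matrix V V ℚ) (w : V) :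
    Matrix {u : V // u ≠ w} {u : V // u ≠ w} ℚ :=
  I.submatrix Subtype.val Subtype.val

/-- `det(Γ) := det(-I(Γ))`. -/
def detG {V : Type} [Fintype V] [DecidableEq V] (I : Matrix V V ℚ) : ℚ := (-I).det

def Equiv.subtypeNeSumUnit {n : Type*} [DecidableEq n] (a : n) : {b // b ≠ a} ⊕ Unit ≃ n :=
  (Equiv.optionEquivSumPUnit.{0} _).symm.trans (Equiv.optionSubtypeNe a)

namespace Matrix

theorem PosDef.schur_complement_of_fromBlocks₂₂ {R : Type*} [CommRing R] [PartialOrder R]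
    [StarRing R] {m n : Type*} [Fintype m] [Fintype n] [DecidableEq n]
    {A : Matrix m m R} {B : Matrix m n R} {D : Matrix n n R} [Invertible D]
    (hM : (fromBlocks A B Bᴴ D).PosDef) : (A - B * D⁻¹ * Bᴴ).PosDef := by
  have hD : D.IsHermitian := (isHermitian_fromBlocks_iff.mp hM.1).2.2.2
  rw [posDef_iff_dotProduct_mulVec] at hM ⊢
  refine ⟨(IsHermitian.fromBlocks₂₂ A B hD).mp hM.1, fun x hx => ?_⟩
  -- at this vector the `D`-part of the Schur decomposition of the quadratic form vanishes
  have hne : (x ⊕ᵥ -((D⁻¹ * Bᴴ) *ᵥ x)) ≠ 0 := fun h => hx (funext fun i => congrFun h (.inl i))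
  simpa [dotProduct_mulVec, schur_complement_eq₂₂ A B _ _ hD] using hM.2 hne

theorem PosDef.det_pos_of_isStrictOrderedRing {K : Type*} [Field K] [LinearOrder K]
    [IsStrictOrderedRing K] [StarRing K] {n : Type*} [Fintype n] [DecidableEq n]
    {A : Matrix n n K} (hA : A.PosDef) : 0 < A.det := by
  induction hk : Fintype.card n generalizing n with
  | zero =>
    have := Fintype.card_eq_zero_iff.mp hk
    simp
  | succ k ih =>
    obtain ⟨a⟩ : Nonempty n := Fintype.card_pos_iff.mp (by omega)
    set e := Equiv.subtypeNeSumUnit a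
    rw [← det_submatrix_equiv_self e]
    set N := A.submatrix e e
    have hN : N.PosDef := hA.submatrix e.injective
    have hblocks : N = fromBlocks N.toBlocks₁₁ N.toBlocks₁₂ N.toBlocks₁₂ᴴ N.toBlocks₂₂ := by
      nth_rewrite 1 [← fromBlocks_toBlocks N]
      congr 1
      ext i j
      exact (hN.1.apply (.inr i) (.inl j)).symm
    have hD : 0 < N.toBlocks₂₂.det := by
      rw [det_unique]
      exact hN.diag_pos
    let _ := invertibleOfIsUnitDet _ (isUnit_iff_ne_zero.mpr hD.ne')
    have hS := (hblocks ▸ hN).schur_complement_of_fromBlocks₂₂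
    have hcard : Fintype.card {b // b ≠ a} = k := by
      simp [Fintype.card_subtype_compl, hk]
    rw [hblocks, det_fromBlocks₂₂, invOf_eq_nonsing_inv]
    exact mul_pos hD (ih hS hcard)

theorem adjugate_apply_self {R : Type*} [CommRing R] {n : Type*} [Fintype n] [DecidableEq n]
    (A : Matrix n n R) (a : n) :
    A.adjugate a a = (A.submatrix ((↑) : {b // b ≠ a} → n) (↑)).det := by
  set e := Equiv.subtypeNeSumUnit a
  rw [adjugate_apply, ← det_submatrix_equiv_self e]
  set N := (A.updateRow a (Pi.single a 1)).submatrix e e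
  have h₂₁ : N.toBlocks₂₁ = 0 := by
    ext _ j
    simp [N, e, toBlocks₂₁, Equiv.subtypeNeSumUnit, j.2]
  have h₁₁ : N.toBlocks₁₁ = A.submatrix (↑) (↑) := by
    ext i j
    simp [N, e, toBlocks₁₁, Equiv.subtypeNeSumUnit, i.2]
  rw [← fromBlocks_toBlocks N, h₂₁, det_fromBlocks_zero₂₁, h₁₁, det_unique N.toBlocks₂₂]
  simp [N, e, toBlocks₂₂, Equiv.subtypeNeSumUnit]

theorem inv_apply_self {K : Type*} [Field K] {n : Type*} [Fintype n] [DecidableEq n]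
    (A : Matrix n n K) (a : n) :
    A⁻¹ a a = (A.submatrix ((↑) : {b // b ≠ a} → n) (↑)).det / A.det := by
  rw [inv_def, smul_apply, adjugate_apply_self, Ring.inverse_eq_inv', smul_eq_mul,
    div_eq_inv_mul]

end Matrix

open Matrix

theorem isSymm_imatQ {V : Type} [Fintype V] [DecidableEq V] (G : SimpleGraph V)
    [DecidableRel G.Adj] (e : V → ℚ) : (imatQ G.Adj e).IsSymm :=
  IsSymm.ext fun i j => by
    by_cases h : i = j
    · simp [imatQ, h]
    · simp [imatQ, h, Ne.symm h, G.adj_comm]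

theorem negDefQ_iff_posDef_neg {V : Type} [Fintype V] {M : Matrix V V ℚ} (hM : M.IsSymm) :
    NegDefQ M ↔ (-M).PosDef := by
  rw [posDef_iff_dotProduct_mulVec]
  simp [NegDefQ, dotProduct, mulVec, Finset.mul_sum, mul_assoc, hM]

section Join

variable {V₁ V₂ : Type} [Fintype V₁] [DecidableEq V₁] [Fintype V₂] [DecidableEq V₂]

theorem joinMat_eq_fromBlocks (M₁ : Matrix V₁ V₁ ℚ) (M₂ : Matrix V₂ V₂ ℚ) (v : V₁) (w : V₂) :
    joinMat M₁ M₂ v w = fromBlocks M₁ (single v w 1) (single w v 1) M₂ := by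
  ext (i | i) (j | j) <;> simp [joinMat, single, eq_comm]

theorem Matrix.IsSymm.joinMat {M₁ : Matrix V₁ V₁ ℚ} {M₂ : Matrix V₂ V₂ ℚ} (h₁ : M₁.IsSymm)
    (h₂ : M₂.IsSymm) (v : V₁) (w : V₂) : (joinMat M₁ M₂ v w).IsSymm := by
  rw [joinMat_eq_fromBlocks]
  exact h₁.fromBlocks (transpose_single _ _ _) h₂

theorem detG_joinMat (M₁ : Matrix V₁ V₁ ℚ) {M₂ : Matrix V₂ V₂ ℚ} (v : V₁) (w : V₂)
    (hM₂ : detG M₂ ≠ 0) :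
    detG (joinMat M₁ M₂ v w) =
      detG M₂ * detG (M₁ + single v v (detG (delVertMat M₂ w) / detG M₂)) := by
  have : Invertible (-M₂) := invertibleOfIsUnitDet _ (isUnit_iff_ne_zero.mpr hM₂)
  have hX : (-M₂)⁻¹ w w = detG (delVertMat M₂ w) / detG M₂ := inv_apply_self (-M₂) w
  rw [detG, joinMat_eq_fromBlocks, fromBlocks_neg, det_fromBlocks₂₂, invOf_eq_nonsing_inv]
  simp only [Matrix.neg_mul, Matrix.mul_neg, neg_neg, single_mul_mul_single, one_mul, mul_one,
    hX]
  rw [← neg_add']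
  rfl

end Join

theorem detG_submatrix_equiv {V W : Type} [Fintype V] [DecidableEq V] [Fintype W]
    [DecidableEq W] (M : Matrix V V ℚ) (e : W ≃ V) : detG (M.submatrix e e) = detG M :=
  det_submatrix_equiv_self e (-M)

theorem detG_attachMat {V : Type} [Fintype V] [DecidableEq V] (M : Matrix V V ℚ) (v : V)
    {x : ℚ} (hx : x ≠ 0) :
    detG (attachMat M v x) = -x * detG (M + single v v (1 / -x)) := by
  have hsub : attachMat M v x = (joinMat M (of fun _ _ => x : Matrix Unit Unit ℚ) v ()).submatrix
      (Equiv.optionEquivSumPUnit V) (Equiv.optionEquivSumPUnit V) := by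
    ext (_ | i) (_ | j) <;> simp [attachMat, joinMat]
  have hx' : detG (of fun _ _ => x : Matrix Unit Unit ℚ) = -x := by simp [detG]
  have : IsEmpty {u : Unit // u ≠ ()} := ⟨fun u => u.2 rfl⟩
  have hdel : detG (delVertMat (of fun _ _ => x : Matrix Unit Unit ℚ) ()) = 1 := det_isEmpty
  rw [hsub, detG_submatrix_equiv,
    detG_joinMat _ _ _ (by rw [hx']; exact neg_ne_zero.mpr hx), hx', hdel]

theorem det_attach_inv_general {V₁ V₂ : Type} [Fintype V₁] [DecidableEq V₁]
    [Fintype V₂] [DecidableEq V₂]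
    (G₁ : SimpleGraph V₁) [DecidableRel G₁.Adj] (G₂ : SimpleGraph V₂) [DecidableRel G₂.Adj]
    (e₁ : V₁ → ℚ) (e₂ : V₂ → ℚ) (v : V₁) (w : V₂)
    (hneg : NegDefQ (joinMat (imatQ G₁.Adj e₁) (imatQ G₂.Adj e₂) v w)) :
    detG (attachMat (imatQ G₁.Adj e₁) v
        (1 / (-(detG (delVertMat (imatQ G₂.Adj e₂) w)) / detG (imatQ G₂.Adj e₂))))
      = detG (joinMat (imatQ G₁.Adj e₁) (imatQ G₂.Adj e₂) v w)
          / detG (delVertMat (imatQ G₂.Adj e₂) w) ∧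
    0 < detG (attachMat (imatQ G₁.Adj e₁) v
        (1 / (-(detG (delVertMat (imatQ G₂.Adj e₂) w)) / detG (imatQ G₂.Adj e₂)))) := by
  set M₁ := imatQ G₁.Adj e₁
  set M₂ := imatQ G₂.Adj e₂
  have hPD : (-joinMat M₁ M₂ v w).PosDef :=
    (negDefQ_iff_posDef_neg ((isSymm_imatQ G₁ e₁).joinMat (isSymm_imatQ G₂ e₂) v w)).mp hneg
  have hΓ : 0 < detG (joinMat M₁ M₂ v w) := hPD.det_pos_of_isStrictOrderedRing
  have hΓw : 0 < detG M₂ := (hPD.submatrix Sum.inr_injective).det_pos_of_isStrictOrderedRing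
  have hΓw' : 0 < detG (delVertMat M₂ w) :=
    ((hPD.submatrix Sum.inr_injective).submatrix
      Subtype.val_injective).det_pos_of_isStrictOrderedRing
  have hjoin := detG_joinMat M₁ v w hΓw.ne'
  set d := detG M₂
  set d' := detG (delVertMat M₂ w)
  have heq : detG (attachMat M₁ v (1 / (-d' / d))) = detG (joinMat M₁ M₂ v w) / d' := by
    rw [detG_attachMat M₁ v (one_div_ne_zero (div_ne_zero (neg_ne_zero.mpr hΓw'.ne') hΓw.ne')),
      hjoin, show 1 / -(1 / (-d' / d)) = d' / d by field_simp]
    field_simp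
  exact ⟨heq, heq ▸ div_pos hΓ hΓw'⟩

/-- Lemma 2.5, second part: with `Γ = Γ_v ∪_e Γ_w` a connected negative
definite plumbing tree and `r = -det(Γ_w∖w)/det(Γ_w)`, the graph `Γ_v(1/r)` obtained
from `Γ_v` by attaching a new vertex decorated `1/r` to `v` satisfies
`det(Γ_v(1/r)) = det(Γ)/det(Γ_w∖w) > 0`. -/
theorem det_attach_inv {V₁ V₂ : Type} [Fintype V₁] [DecidableEq V₁]
    [Fintype V₂] [DecidableEq V₂]
    (G₁ : SimpleGraph V₁) [DecidableRel G₁.Adj] (G₂ : SimpleGraph V₂) [DecidableRel G₂.Adj]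
    (e₁ : V₁ → ℚ) (e₂ : V₂ → ℚ) (v : V₁) (w : V₂)
    (hT₁ : G₁.IsTree) (hT₂ : G₂.IsTree)
    (hneg : NegDefQ (joinMat (imatQ G₁.Adj e₁) (imatQ G₂.Adj e₂) v w)) :
    detG (attachMat (imatQ G₁.Adj e₁) v
        (1 / (-(detG (delVertMat (imatQ G₂.Adj e₂) w)) / detG (imatQ G₂.Adj e₂))))
      = detG (joinMat (imatQ G₁.Adj e₁) (imatQ G₂.Adj e₂) v w)
          / detG (delVertMat (imatQ G₂.Adj e₂) w) ∧
    0 < detG (attachMat (imatQ G₁.Adj e₁) v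
        (1 / (-(detG (delVertMat (imatQ G₂.Adj e₂) w)) / detG (imatQ G₂.Adj e₂)))) :=
  det_attach_inv_general G₁ G₂ e₁ e₂ v w hneg
end
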